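/- arXiv:2509.24538 — 2 statements merged into one kernel-verified Lean document; each statement's English description precedes it below -/
import Mathlib

section
/- Let m = m_N and k = k_N be sequences with m = o(N) and k = o(N), and let R_N be a sequence with R_N = o(N^{1/2}). For a real m×k matrix B set X = (1/N)·B·Bᵀ and define the remainder R'_N(B) := ((N−k−m−1)/2)·log det(Id_m − X) + ‖B‖_F²/2 − ((k+m+1)/(2N))·‖B‖_F² + Tr((B·Bᵀ)²)/(4N). Then there exists a constant C > 0 such that for all sufficiently large N and all B with ‖B‖_F ≤ R_N (so that in particular ‖X‖_op < 1), one has |R'_N(B)| ≤ C·((k+m)·R_N⁴/N² + R_N⁶/N²). -/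
open MeasureTheory Filter Matrix Asymptotics

/-- The multivariate gamma function `Γ_m(x) = π^{m(m-1)/4} ∏_{i=1}^m Γ(x - (i-1)/2)`. -/
noncomputable def mvGamma (m : ℕ) (x : ℝ) : ℝ :=
  Real.pi ^ ((m : ℝ) * ((m : ℝ) - 1) / 4) *
    ∏ i ∈ Finset.range m, Real.Gamma (x - (i : ℝ) / 2)

/-- Squared Frobenius norm of a matrix. -/
def frobSq {m k : ℕ} (B : Matrix (Fin m) (Fin k) ℝ) : ℝ :=
  ∑ i, ∑ j, (B i j) ^ 2

/-- Frobenius norm of a matrix. -/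
noncomputable def frobNorm {m k : ℕ} (B : Matrix (Fin m) (Fin k) ℝ) : ℝ :=
  Real.sqrt (frobSq B)

open Finset

/-! For `X = N⁻¹ B Bᵀ ⪰ 0` with eigenvalues `μᵢ ≥ 0` we have `∑ μᵢ = tr X = ‖B‖_F² / N ≤ R² / N`,
which is eventually `≤ 1/4`. Since `log det (1 - X) = ∑ log (1 - μᵢ)`, the remainder is exactly
`(k+m+1)/4 · ∑ μᵢ² + (N-k-m-1)/2 · ∑ (log (1 - μᵢ) + μᵢ + μᵢ²/2)`, and the two sums are bounded
by `(∑ μᵢ)²` and `2 (∑ μᵢ)³` respectively. -/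

lemma Real.abs_log_one_sub_add_add_sq_div_two_le {x : ℝ} (h0 : 0 ≤ x) (h1 : x ≤ 1 / 2) :
    |Real.log (1 - x) + x + x ^ 2 / 2| ≤ 2 * x ^ 3 := by
  have H := Real.abs_log_sub_add_sum_range_le (x := x) (by rw [abs_of_nonneg h0]; linarith) 2
  norm_num [sum_range_succ, abs_of_nonneg h0] at H
  calc _ = |x + x ^ 2 / 2 + Real.log (1 - x)| := by ring_nf
    _ ≤ x ^ 3 / (1 - x) := H
    _ ≤ 2 * x ^ 3 := by
        rw [div_le_iff₀ (by linarith)]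
        nlinarith [pow_nonneg h0 3]

lemma Finset.sum_pow_three_le_pow_three_sum {ι : Type*} {s : Finset ι} {f : ι → ℝ}
    (hf : ∀ i ∈ s, 0 ≤ f i) : ∑ i ∈ s, f i ^ 3 ≤ (∑ i ∈ s, f i) ^ 3 :=
  calc ∑ i ∈ s, f i ^ 3 ≤ ∑ i ∈ s, f i * (∑ j ∈ s, f j) ^ 2 := by
        refine sum_le_sum fun i hi => ?_
        rw [pow_succ']
        gcongr
        exacts [hf i hi, hf i hi, single_le_sum hf hi]
    _ = (∑ i ∈ s, f i) ^ 3 := by rw [← sum_mul]; ring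

lemma Finset.abs_sum_log_one_sub_add_add_sq_div_two_le {ι : Type*} {s : Finset ι} {f : ι → ℝ}
    (hf : ∀ i ∈ s, 0 ≤ f i) (hs : ∑ i ∈ s, f i ≤ 1 / 2) :
    |∑ i ∈ s, (Real.log (1 - f i) + f i + f i ^ 2 / 2)| ≤ 2 * (∑ i ∈ s, f i) ^ 3 :=
  calc _ ≤ ∑ i ∈ s, |Real.log (1 - f i) + f i + f i ^ 2 / 2| := abs_sum_le_sum_abs _ _
    _ ≤ ∑ i ∈ s, 2 * f i ^ 3 := sum_le_sum fun i hi =>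
        Real.abs_log_one_sub_add_add_sq_div_two_le (hf i hi) ((single_le_sum hf hi).trans hs)
    _ ≤ 2 * (∑ i ∈ s, f i) ^ 3 := by
        rw [← mul_sum]; gcongr; exact sum_pow_three_le_pow_three_sum hf

namespace Matrix.IsHermitian

variable {𝕜 n : Type*} [RCLike 𝕜] [Fintype n] [DecidableEq n] {A : Matrix n n 𝕜}

lemma det_one_sub_eq_prod (hA : A.IsHermitian) :
    det (1 - A) = ∏ i, (1 - (hA.eigenvalues i : 𝕜)) := by
  have h := eval_charpoly A 1
  rw [map_one] at h
  rw [← h, hA.charpoly_eq, Polynomial.eval_prod]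
  simp

lemma trace_mul_self_eq_sum (hA : A.IsHermitian) :
    trace (A * A) = ∑ i, (hA.eigenvalues i : 𝕜) ^ 2 := by
  conv_lhs => rw [hA.spectral_theorem, ← map_mul]
  rw [Unitary.conjStarAlgAut_apply, trace_mul_cycle,
    Unitary.coe_star_mul_self, one_mul, diagonal_mul_diagonal, trace_diagonal]
  simp [sq]

end Matrix.IsHermitian

lemma Matrix.IsHermitian.log_det_one_sub_eq {n : Type*} [Fintype n] [DecidableEq n]
    {A : Matrix n n ℝ} (hA : A.IsHermitian) (h1 : ∀ i, hA.eigenvalues i ≠ 1) :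
    Real.log (det (1 - A)) = ∑ i, (Real.log (1 - hA.eigenvalues i) + hA.eigenvalues i
      + hA.eigenvalues i ^ 2 / 2) - trace A - trace (A * A) / 2 := by
  rw [hA.det_one_sub_eq_prod, hA.trace_eq_sum_eigenvalues, hA.trace_mul_self_eq_sum]
  simp only [RCLike.ofReal_real_eq_id, id]
  rw [Real.log_prod fun i _ => sub_ne_zero.mpr (h1 i).symm, sum_add_distrib, sum_add_distrib,
    sum_div]
  ring

section Frobenius

variable {m k : ℕ} (B : Matrix (Fin m) (Fin k) ℝ)

lemma frobSq_nonneg : 0 ≤ frobSq B :=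
  sum_nonneg fun _ _ => sum_nonneg fun _ _ => sq_nonneg _

lemma frobSq_le_sq_of_frobNorm_le {r : ℝ} (h : frobNorm B ≤ r) : frobSq B ≤ r ^ 2 := by
  unfold frobNorm at h
  rw [← Real.sq_sqrt (frobSq_nonneg B)]
  exact pow_le_pow_left₀ (Real.sqrt_nonneg _) h 2

lemma trace_mul_transpose_eq_frobSq : trace (B * Bᵀ) = frobSq B := by
  simp [trace, mul_apply, frobSq, sq]

lemma posSemidef_smul_mul_transpose {c : ℝ} (hc : 0 ≤ c) : (c • (B * Bᵀ)).PosSemidef := by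
  simpa [← conjTranspose_eq_transpose_of_trivial] using
    (posSemidef_self_mul_conjTranspose B).smul hc

end Frobenius

lemma logDet_remainder_eq {m k : ℕ} {n : ℝ} (hn : n ≠ 0) (B : Matrix (Fin m) (Fin k) ℝ)
    (hX : (n⁻¹ • (B * Bᵀ)).IsHermitian) (h1 : ∀ i, hX.eigenvalues i ≠ 1) :
    ((n - k - m - 1) / 2) * Real.log (det (1 - n⁻¹ • (B * Bᵀ))) + frobSq B / 2
      - ((k + m + 1) / (2 * n)) * frobSq B + trace ((B * Bᵀ) * (B * Bᵀ)) / (4 * n)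
    = ((k + m + 1) / 4) * ∑ i, hX.eigenvalues i ^ 2 + ((n - k - m - 1) / 2) *
      ∑ i, (Real.log (1 - hX.eigenvalues i) + hX.eigenvalues i + hX.eigenvalues i ^ 2 / 2) := by
  have hsq := hX.trace_mul_self_eq_sum
  simp only [RCLike.ofReal_real_eq_id, id, smul_mul_smul, trace_smul, smul_eq_mul] at hsq
  have hT : trace ((B * Bᵀ) * (B * Bᵀ)) = n ^ 2 * ∑ i, hX.eigenvalues i ^ 2 := by
    rw [← hsq]; field_simp
  rw [hX.log_det_one_sub_eq h1, trace_smul, trace_mul_transpose_eq_frobSq, smul_mul_smul,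
    trace_smul, hT, smul_eq_mul, smul_eq_mul]
  field_simp
  ring

theorem abs_logDet_remainder_le {m k : ℕ} {n r : ℝ} (hn : 0 < n) (hr : 4 * r ^ 2 ≤ n)
    (B : Matrix (Fin m) (Fin k) ℝ) (hB : frobNorm B ≤ r) :
    |((n - k - m - 1) / 2) * Real.log (det (1 - n⁻¹ • (B * Bᵀ))) + frobSq B / 2
      - ((k + m + 1) / (2 * n)) * frobSq B + trace ((B * Bᵀ) * (B * Bᵀ)) / (4 * n)|
    ≤ (k + m) * r ^ 4 / n ^ 2 + r ^ 6 / n ^ 2 := by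
  rcases Nat.eq_zero_or_pos m with rfl | hm
  · simp [frobSq]
    positivity
  have hX := posSemidef_smul_mul_transpose B (inv_nonneg.2 hn.le)
  set μ := hX.isHermitian.eigenvalues
  have hμ : ∀ i ∈ univ, 0 ≤ μ i := fun i _ => hX.eigenvalues_nonneg i
  set u := r ^ 2 / n
  have hu : u ≤ 1 / 4 := by rw [div_le_iff₀ hn]; linarith
  have hu0 : 0 ≤ u := by positivity
  have hS1 : ∑ i, μ i ≤ u := by
    have h := hX.isHermitian.trace_eq_sum_eigenvalues
    simp only [RCLike.ofReal_real_eq_id, id, trace_smul, trace_mul_transpose_eq_frobSq,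
      smul_eq_mul] at h
    rw [← h, inv_mul_eq_div]
    exact div_le_div_of_nonneg_right (frobSq_le_sq_of_frobNorm_le B hB) hn.le
  have hμ1 : ∀ i, μ i ≠ 1 := fun i => by
    linarith [single_le_sum hμ (mem_univ i)]
  have hS2 : ∑ i, μ i ^ 2 ≤ u ^ 2 :=
    (sum_sq_le_sq_sum_of_nonneg hμ).trans (pow_le_pow_left₀ (sum_nonneg hμ) hS1 2)
  have hE : |∑ i, (Real.log (1 - μ i) + μ i + μ i ^ 2 / 2)| ≤ 2 * u ^ 3 :=
    (abs_sum_log_one_sub_add_add_sq_div_two_le hμ (by linarith)).trans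
      (by gcongr; exact sum_nonneg hμ)
  have hcoef : |(n - k - m - 1) / 2| ≤ (n + k + m + 1) / 2 := by
    have hk : (0 : ℝ) ≤ k := k.cast_nonneg
    have hm : (0 : ℝ) ≤ m := m.cast_nonneg
    rw [abs_le]; constructor <;> linarith
  have hkm : (k + m + 1 : ℝ) ≤ 2 * (k + m) := by
    have : (1 : ℝ) ≤ m := by exact_mod_cast hm
    linarith [(k.cast_nonneg : (0 : ℝ) ≤ k)]
  rw [logDet_remainder_eq hn.ne' B hX.isHermitian hμ1]
  calc _ ≤ (k + m + 1) / 4 * ∑ i, μ i ^ 2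
        + |(n - k - m - 1) / 2| * |∑ i, (Real.log (1 - μ i) + μ i + μ i ^ 2 / 2)| := by
        refine (abs_add_le _ _).trans ?_
        rw [abs_mul, abs_mul, abs_of_nonneg (by positivity : (0 : ℝ) ≤ (k + m + 1) / 4),
          abs_of_nonneg (sum_nonneg fun i _ => sq_nonneg (μ i))]
    _ ≤ (k + m + 1) / 4 * u ^ 2 + (n + k + m + 1) / 2 * (2 * u ^ 3) := by gcongr
    _ ≤ (k + m) * u ^ 2 + n * u ^ 3 := by
        -- `(k+m+1) u³ ≤ (k+m+1) u² / 4` since `u ≤ 1/4`, then `k+m+1 ≤ 2 (k+m)`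
        nlinarith [mul_nonneg (mul_nonneg (by positivity : (0 : ℝ) ≤ k + m + 1) (sq_nonneg u))
          (by linarith : 0 ≤ 1 / 4 - u), mul_nonneg (sub_nonneg.2 hkm) (sq_nonneg u)]
    _ = (k + m) * r ^ 4 / n ^ 2 + r ^ 6 / n ^ 2 := by
        simp only [u]; field_simp

lemma Asymptotics.IsLittleO.eventually_mul_sq_le {α : Type*} {l : Filter α} {f g : α → ℝ}
    (hg : ∀ x, 0 ≤ g x) (hf : f =o[l] fun x => g x ^ (1 / 2 : ℝ)) {c : ℝ} (hc : 0 < c) :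
    ∀ᶠ x in l, c * f x ^ 2 ≤ g x := by
  filter_upwards [(hf.pow two_pos).bound (inv_pos.2 hc)] with x hx
  rw [← Real.sqrt_eq_rpow, Real.sq_sqrt (hg x), Real.norm_of_nonneg (sq_nonneg _),
    Real.norm_of_nonneg (hg x)] at hx
  rwa [← le_inv_mul_iff₀ hc]

theorem stmt_5_general
    (m k : ℕ → ℕ)
    (R : ℕ → ℝ) (hR : R =o[atTop] fun N => (N : ℝ) ^ ((1 : ℝ) / 2)) :
    ∃ C > (0 : ℝ), ∀ᶠ N : ℕ in atTop,
      ∀ B : Matrix (Fin (m N)) (Fin (k N)) ℝ, frobNorm B ≤ R N →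
        |(((N : ℝ) - k N - m N - 1) / 2) *
              Real.log (Matrix.det (1 - ((N : ℝ))⁻¹ • (B * Bᵀ)))
            + frobSq B / 2
            - (((k N : ℝ) + m N + 1) / (2 * N)) * frobSq B
            + Matrix.trace ((B * Bᵀ) * (B * Bᵀ)) / (4 * N)| ≤
          C * (((k N : ℝ) + m N) * R N ^ 4 / (N : ℝ) ^ 2 + R N ^ 6 / (N : ℝ) ^ 2) := by
  refine ⟨1, one_pos, ?_⟩
  filter_upwards [hR.eventually_mul_sq_le (fun N => N.cast_nonneg) four_pos,
    eventually_gt_atTop 0] with N hRN hN B hB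
  rw [one_mul]
  exact abs_logDet_remainder_le (by exact_mod_cast hN) hRN B hB

/-- **Log-determinant expansion remainder bound.** With `X = (1/N)·B·Bᵀ` and
`R'_N(B) = ((N-k-m-1)/2)·log det(Id_m - X) + ‖B‖_F²/2 - ((k+m+1)/(2N))·‖B‖_F²
+ Tr((BBᵀ)²)/(4N)`, one has `|R'_N(B)| ≤ C((k+m)R_N⁴/N² + R_N⁶/N²)` for all large `N`
and all `B` with `‖B‖_F ≤ R_N`. -/
theorem stmt_5
    (m k : ℕ → ℕ)
    (hm : (fun N => (m N : ℝ)) =o[atTop] fun N => (N : ℝ))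
    (hk : (fun N => (k N : ℝ)) =o[atTop] fun N => (N : ℝ))
    (R : ℕ → ℝ) (hR : R =o[atTop] fun N => (N : ℝ) ^ ((1 : ℝ) / 2)) :
    ∃ C > (0 : ℝ), ∀ᶠ N : ℕ in atTop,
      ∀ B : Matrix (Fin (m N)) (Fin (k N)) ℝ, frobNorm B ≤ R N →
        |(((N : ℝ) - k N - m N - 1) / 2) *
              Real.log (Matrix.det (1 - ((N : ℝ))⁻¹ • (B * Bᵀ)))
            + frobSq B / 2
            - (((k N : ℝ) + m N + 1) / (2 * N)) * frobSq B
            + Matrix.trace ((B * Bᵀ) * (B * Bᵀ)) / (4 * N)| ≤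
          C * (((k N : ℝ) + m N) * R N ^ 4 / (N : ℝ) ^ 2 + R N ^ 6 / (N : ℝ) ^ 2) :=
  stmt_5_general m k R hR
end

section
/- Fix m, k ∈ ℕ and for each N ≥ m+k let Z_N be the m×k upper-left block of a Haar-distributed matrix in O(N). Let β_N be a sequence of positive reals with β_N → ∞ and β_N = o(√N). Then for every ε > 0, taking the compact set K = [−√(2mε), √(2mε)]^{m×k} ⊆ ℝ^{m×k}, one has limsup_{N→∞} (β_N²/N)·log ℙ(β_N·Z_N ∉ K) ≤ −ε. In particular, the sequence β_N·Z_N is exponentially tight with respect to the speed N/β_N². -/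
/-!
Entries of a Haar orthogonal matrix have Gaussian tails at scale `N^{-1/2}`. Let `x, y` be
two entries of one column. Invariance under the rotation in the plane of their rows, averaged
over the angle and integrated in polar coordinates, gives `E[x^{2q+2}] = (2q+1) E[x^{2q} y^2]`;
together with `∑_b A_{bc}^2 = 1` this yields `N E[x^{2q+2}] ≤ (2q+1) E[x^{2q}]`, hence
`N^p E[x^{2p}] ≤ 2^p p!`. Markov's inequality with `p = ⌊γ⌋`, `γ = N t^2 / 2`, and Stirling's
bound give `ℙ(|x| ≥ t) ≤ γ e^{2-γ}`. A union bound over the `m k` entries of the block at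
level `t = √(2mε) / β_N`, where `γ = mεN/β_N^2 → ∞` because `β_N = o(√N)`, gives
`(β_N^2/N) log ℙ(β_N Z_N ∉ K) ≤ -mε + o(1)`.
-/

open MeasureTheory Filter Matrix Asymptotics

noncomputable instance matrixMeasurableSpace {N : ℕ} :
    MeasurableSpace (Matrix (Fin N) (Fin N) ℝ) :=
  show MeasurableSpace (Fin N → Fin N → ℝ) from inferInstance

/-- The upper-left `m × k` block of an `N × N` matrix (padded with zeros if needed). -/
def blockEmb (m k : ℕ) {N : ℕ} (A : Matrix (Fin N) (Fin N) ℝ) :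
    Matrix (Fin m) (Fin k) ℝ :=
  Matrix.of fun i j => if h : (i : ℕ) < N ∧ (j : ℕ) < N then A ⟨i, h.1⟩ ⟨j, h.2⟩ else 0

open Real
open scoped Nat ENNReal Topology

section

variable {n : Type*} [Fintype n] [DecidableEq n]

noncomputable def planeRotation (a b : n) (θ : ℝ) : Matrix n n ℝ :=
  Matrix.of fun x y =>
    if x = a then (if y = a then cos θ else if y = b then -sin θ else 0)
    else if x = b then (if y = a then sin θ else if y = b then cos θ else 0)
    else if y = x then 1 else 0

lemma planeRotation_mul_apply {ι : Type*} {a b : n} (hab : a ≠ b) (θ : ℝ)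
    (A : Matrix n ι ℝ) (x : n) (c : ι) :
    (planeRotation a b θ * A) x c =
      if x = a then cos θ * A a c - sin θ * A b c
      else if x = b then sin θ * A a c + cos θ * A b c
      else A x c := by
  rw [Matrix.mul_apply]
  split_ifs with hxa hxb
  · rw [Fintype.sum_eq_add a b hab fun y hy => by simp [planeRotation, hxa, hy.1, hy.2]]
    simp [planeRotation, hxa, hab.symm]
    ring
  · rw [Fintype.sum_eq_add a b hab fun y hy => by simp [planeRotation, hxb, hy.1, hy.2]]
    simp [planeRotation, hxb, hab.symm]
  · simp [planeRotation, hxa, hxb]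

lemma planeRotation_mul_transpose_self {a b : n} (hab : a ≠ b) (θ : ℝ) :
    planeRotation a b θ * (planeRotation a b θ)ᵀ = 1 := by
  ext x y
  rw [planeRotation_mul_apply hab]
  by_cases hya : y = a <;> by_cases hyb : y = b <;>
    simp [planeRotation, Matrix.one_apply, hya, hyb, hab.symm] <;> split_ifs <;>
    simp_all [← sq] <;> ring

lemma Matrix.sum_sq_col_eq_one {A : Matrix n n ℝ} (hA : A * Aᵀ = 1) (c : n) :
    ∑ b, A b c ^ 2 = 1 := by
  have h : (Aᵀ * A) c c = 1 := by rw [mul_eq_one_comm.mp hA, Matrix.one_apply_eq]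
  simpa [Matrix.mul_apply, sq] using h

lemma Matrix.abs_apply_le_one {A : Matrix n n ℝ} (hA : A * Aᵀ = 1) (a c : n) :
    |A a c| ≤ 1 := by
  rw [← sq_le_one_iff_abs_le_one, ← Matrix.sum_sq_col_eq_one hA c]
  exact Finset.single_le_sum (fun b _ => sq_nonneg (A b c)) (Finset.mem_univ a)

end

lemma integral_cos_pow_two_mul_succ (q : ℕ) :
    ∫ θ in (0 : ℝ)..2 * π, cos θ ^ (2 * (q + 1)) =
      (2 * q + 1) * ∫ θ in (0 : ℝ)..2 * π, cos θ ^ (2 * q) * sin θ ^ 2 := by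
  rw [mul_add, mul_one]
  have hrec := integral_cos_pow (a := 0) (b := 2 * π) (n := 2 * q)
  simp only [sin_two_pi, sin_zero, mul_zero, sub_zero, zero_div, zero_add] at hrec
  have hsin : ∀ θ, cos θ ^ (2 * q) * sin θ ^ 2 = cos θ ^ (2 * q) - cos θ ^ (2 * q + 2) := by
    intro θ; rw [sin_sq]; ring
  simp_rw [hsin]
  rw [intervalIntegral.integral_sub (by apply Continuous.intervalIntegrable; fun_prop)
    (by apply Continuous.intervalIntegrable; fun_prop), hrec]
  push_cast
  field_simp
  ring

lemma integral_rotate_pow_mul_pow (j l : ℕ) (x y : ℝ) :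
    ∫ θ in (0 : ℝ)..2 * π, (cos θ * x - sin θ * y) ^ (2 * j) * (sin θ * x + cos θ * y) ^ (2 * l) =
      (x ^ 2 + y ^ 2) ^ (j + l) * ∫ θ in (0 : ℝ)..2 * π, cos θ ^ (2 * j) * sin θ ^ (2 * l) := by
  set z : ℂ := ⟨x, y⟩
  have hx : ‖z‖ * cos (Complex.arg z) = x := Complex.norm_mul_cos_arg z
  have hy : ‖z‖ * sin (Complex.arg z) = y := Complex.norm_mul_sin_arg z
  have hnorm : ‖z‖ ^ 2 = x ^ 2 + y ^ 2 := by
    rw [Complex.sq_norm, Complex.normSq_apply]; ring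
  have hpolar : ∀ θ, (cos θ * x - sin θ * y) ^ (2 * j) * (sin θ * x + cos θ * y) ^ (2 * l) =
      (x ^ 2 + y ^ 2) ^ (j + l) *
        (cos (θ + Complex.arg z) ^ (2 * j) * sin (θ + Complex.arg z) ^ (2 * l)) := by
    intro θ
    have hc : cos θ * x - sin θ * y = ‖z‖ * cos (θ + Complex.arg z) := by
      rw [cos_add, ← hx, ← hy]; ring
    have hs : sin θ * x + cos θ * y = ‖z‖ * sin (θ + Complex.arg z) := by
      rw [sin_add, ← hx, ← hy]; ring
    rw [hc, hs, mul_pow, mul_pow, ← hnorm, ← pow_mul, mul_add, pow_add]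
    ring
  have hper : Function.Periodic (fun θ => cos θ ^ (2 * j) * sin θ ^ (2 * l)) (2 * π) := by
    intro θ; simp
  simp_rw [hpolar]
  rw [intervalIntegral.integral_const_mul,
    intervalIntegral.integral_comp_add_right (fun θ => cos θ ^ (2 * j) * sin θ ^ (2 * l)),
    zero_add, add_comm (2 * π), hper.intervalIntegral_add_eq (Complex.arg z) 0, zero_add]

lemma factorial_le_exp_one_mul_sqrt_mul_pow {n : ℕ} (hn : n ≠ 0) :
    (n ! : ℝ) ≤ exp 1 * √n * (n / exp 1) ^ n := by
  obtain ⟨k, rfl⟩ := Nat.exists_eq_succ_of_ne_zero hn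
  have h : Stirling.stirlingSeq (k + 1) ≤ Stirling.stirlingSeq 1 :=
    Stirling.stirlingSeq'_antitone (Nat.zero_le k)
  rw [Stirling.stirlingSeq_one, Stirling.stirlingSeq, div_le_iff₀ (by positivity),
    sqrt_mul zero_le_two] at h
  refine h.trans_eq ?_
  field_simp

lemma factorial_floor_div_pow_le {γ : ℝ} (hγ : 1 ≤ γ) :
    (⌊γ⌋₊ ! : ℝ) / γ ^ ⌊γ⌋₊ ≤ γ * exp (2 - γ) := by
  set p := ⌊γ⌋₊
  have hp : 1 ≤ p := Nat.le_floor (by exact_mod_cast hγ)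
  have hpγ : (p : ℝ) ≤ γ := Nat.floor_le (by linarith)
  have hγp : γ < p + 1 := Nat.lt_floor_add_one γ
  have hp1 : (1 : ℝ) ≤ p := by exact_mod_cast hp
  calc (p ! : ℝ) / γ ^ p ≤ exp 1 * √p * (p / exp 1) ^ p / γ ^ p := by
        gcongr; exact factorial_le_exp_one_mul_sqrt_mul_pow (by omega)
    _ = exp 1 * √p * (p / γ) ^ p * exp (-p) := by
        rw [div_pow, div_pow, exp_one_pow, exp_neg]
        field_simp
    _ ≤ exp 1 * γ * 1 * exp (1 - γ) := by
        gcongr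
        · exact (sqrt_le_self_iff.mpr (Or.inr hp1)).trans hpγ
        · exact pow_le_one₀ (by positivity) ((div_le_one (by positivity)).mpr hpγ)
        · linarith
    _ = γ * exp (2 - γ) := by
        rw [mul_one, mul_comm (exp 1), mul_assoc, ← exp_add]; ring_nf

noncomputable instance matrixBorelSpace {N : ℕ} : BorelSpace (Matrix (Fin N) (Fin N) ℝ) :=
  inferInstanceAs (BorelSpace (Fin N → Fin N → ℝ))

lemma measurableSet_mul_transpose_eq_one {N : ℕ} :
    MeasurableSet {A : Matrix (Fin N) (Fin N) ℝ | A * Aᵀ = 1} :=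
  (isClosed_eq (continuous_id.matrix_mul continuous_id.matrix_transpose)
    continuous_const).measurableSet

lemma blockEmb_apply_of_le {m k N : ℕ} (hm : m ≤ N) (hk : k ≤ N)
    (A : Matrix (Fin N) (Fin N) ℝ) (i : Fin m) (j : Fin k) :
    blockEmb m k A i j = A (Fin.castLE hm i) (Fin.castLE hk j) := by
  simp [blockEmb, Fin.castLE, (i.2.trans_le hm), (j.2.trans_le hk)]

structure IsOrthogonalHaar {N : ℕ} (μ : Measure (Matrix (Fin N) (Fin N) ℝ)) : Prop where
  measure_orthogonal : μ {A | A * Aᵀ = 1} = 1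
  map_mul_left : ∀ B : Matrix (Fin N) (Fin N) ℝ, B * Bᵀ = 1 → μ.map (B * ·) = μ

namespace IsOrthogonalHaar

variable {N : ℕ} {μ : Measure (Matrix (Fin N) (Fin N) ℝ)}

lemma ae_mul_transpose_eq_one [IsProbabilityMeasure μ] (hμ : IsOrthogonalHaar μ) :
    ∀ᵐ A ∂μ, A * Aᵀ = 1 := by
  rw [ae_iff, ← Set.compl_ofPred, measure_compl measurableSet_mul_transpose_eq_one
    (measure_ne_top μ _), hμ.measure_orthogonal, measure_univ, tsub_self]

lemma integral_comp_mul_left (hμ : IsOrthogonalHaar μ) {B : Matrix (Fin N) (Fin N) ℝ}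
    (hB : B * Bᵀ = 1) {f : Matrix (Fin N) (Fin N) ℝ → ℝ} (hf : Measurable f) :
    ∫ A, f (B * A) ∂μ = ∫ A, f A ∂μ := by
  conv_rhs => rw [← hμ.map_mul_left B hB]
  exact (integral_map (continuous_const.matrix_mul continuous_id).measurable.aemeasurable
    hf.aestronglyMeasurable).symm

lemma integrable_pow_mul_pow [IsProbabilityMeasure μ] (hμ : IsOrthogonalHaar μ)
    (a b c : Fin N) (i l : ℕ) : Integrable (fun A => A a c ^ i * A b c ^ l) μ := by
  refine Integrable.of_bound (by fun_prop) 1 ?_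
  filter_upwards [hμ.ae_mul_transpose_eq_one] with A hA
  rw [norm_mul, norm_pow, norm_pow]
  exact mul_le_one₀ (pow_le_one₀ (norm_nonneg _) (Matrix.abs_apply_le_one hA a c))
    (by positivity) (pow_le_one₀ (norm_nonneg _) (Matrix.abs_apply_le_one hA b c))

lemma integral_planeRotation_pow_mul_pow (hμ : IsOrthogonalHaar μ) {a b : Fin N}
    (hab : a ≠ b) (c : Fin N) (j l : ℕ) (θ : ℝ) :
    ∫ A, (cos θ * A a c - sin θ * A b c) ^ (2 * j) * (sin θ * A a c + cos θ * A b c) ^ (2 * l) ∂μ =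
      ∫ A, A a c ^ (2 * j) * A b c ^ (2 * l) ∂μ := by
  rw [← hμ.integral_comp_mul_left (planeRotation_mul_transpose_self hab θ)
    (f := fun A => A a c ^ (2 * j) * A b c ^ (2 * l)) (by fun_prop)]
  simp only [planeRotation_mul_apply hab, if_pos, if_neg hab.symm]

lemma ae_sq_add_sq_le_one [IsProbabilityMeasure μ] (hμ : IsOrthogonalHaar μ) {a b : Fin N}
    (hab : a ≠ b) (c : Fin N) : ∀ᵐ A ∂μ, A a c ^ 2 + A b c ^ 2 ≤ 1 := by
  filter_upwards [hμ.ae_mul_transpose_eq_one] with A hA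
  rw [← Matrix.sum_sq_col_eq_one hA c, ← Finset.sum_pair (f := fun i => A i c ^ 2) hab]
  exact Finset.sum_le_sum_of_subset_of_nonneg (Finset.subset_univ _) fun _ _ _ => sq_nonneg _

lemma two_pi_mul_integral_pow_mul_pow [IsProbabilityMeasure μ] (hμ : IsOrthogonalHaar μ)
    {a b : Fin N} (hab : a ≠ b) (c : Fin N) (j l : ℕ) :
    2 * π * ∫ A, A a c ^ (2 * j) * A b c ^ (2 * l) ∂μ =
      (∫ θ in (0 : ℝ)..2 * π, cos θ ^ (2 * j) * sin θ ^ (2 * l)) *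
        ∫ A, (A a c ^ 2 + A b c ^ 2) ^ (j + l) ∂μ := by
  set G : ℝ → Matrix (Fin N) (Fin N) ℝ → ℝ := fun θ A =>
    (cos θ * A a c - sin θ * A b c) ^ (2 * j) * (sin θ * A a c + cos θ * A b c) ^ (2 * l)
  have hG : Integrable (Function.uncurry G) ((volume.restrict (Set.Ioc 0 (2 * π))).prod μ) := by
    refine Integrable.of_bound (by fun_prop) 1 ?_
    filter_upwards [Measure.quasiMeasurePreserving_snd.ae (hμ.ae_sq_add_sq_le_one hab c)]
      with ⟨θ, A⟩ hA
    have hrot : (cos θ * A a c - sin θ * A b c) ^ 2 + (sin θ * A a c + cos θ * A b c) ^ 2 =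
        A a c ^ 2 + A b c ^ 2 := by
      linear_combination (A a c ^ 2 + A b c ^ 2) * sin_sq_add_cos_sq θ
    have hu : (cos θ * A a c - sin θ * A b c) ^ 2 ≤ 1 := by
      nlinarith [sq_nonneg (sin θ * A a c + cos θ * A b c)]
    have hv : (sin θ * A a c + cos θ * A b c) ^ 2 ≤ 1 := by
      nlinarith [sq_nonneg (cos θ * A a c - sin θ * A b c)]
    simp only [Function.uncurry_apply_pair, G, norm_mul, norm_pow, Real.norm_eq_abs, pow_mul,
      sq_abs]
    exact mul_le_one₀ (pow_le_one₀ (by positivity) hu) (by positivity)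
      (pow_le_one₀ (by positivity) hv)
  calc 2 * π * ∫ A, A a c ^ (2 * j) * A b c ^ (2 * l) ∂μ
      = ∫ θ in (0 : ℝ)..2 * π, (∫ A, G θ A ∂μ) := by
        simp [G, hμ.integral_planeRotation_pow_mul_pow hab]
    _ = ∫ A, (∫ θ in (0 : ℝ)..2 * π, G θ A) ∂μ := by
        simp_rw [intervalIntegral.integral_of_le two_pi_pos.le]
        exact integral_integral_swap hG
    _ = _ := by
        simp_rw [G, integral_rotate_pow_mul_pow]
        rw [integral_mul_const, mul_comm]

lemma integral_pow_two_mul_succ_eq [IsProbabilityMeasure μ] (hμ : IsOrthogonalHaar μ)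
    {a b : Fin N} (hab : a ≠ b) (c : Fin N) (q : ℕ) :
    ∫ A, A a c ^ (2 * (q + 1)) ∂μ = (2 * q + 1) * ∫ A, A a c ^ (2 * q) * A b c ^ 2 ∂μ := by
  have h1 := hμ.two_pi_mul_integral_pow_mul_pow hab c (q + 1) 0
  have h2 := hμ.two_pi_mul_integral_pow_mul_pow hab c q 1
  simp only [mul_zero, pow_zero, mul_one, add_zero] at h1 h2
  rw [integral_cos_pow_two_mul_succ] at h1
  apply mul_left_cancel₀ two_pi_pos.ne'
  linear_combination h1 - (2 * q + 1) * h2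

lemma integral_pow_eq_sum_integral_pow_mul_sq [IsProbabilityMeasure μ] (hμ : IsOrthogonalHaar μ)
    (a c : Fin N) (q : ℕ) : ∫ A, A a c ^ (2 * q) ∂μ = ∑ b, ∫ A, A a c ^ (2 * q) * A b c ^ 2 ∂μ := by
  rw [← integral_finsetSum _ fun b _ => hμ.integrable_pow_mul_pow a b c _ _]
  refine integral_congr_ae ?_
  filter_upwards [hμ.ae_mul_transpose_eq_one] with A hA
  rw [← Finset.mul_sum, Matrix.sum_sq_col_eq_one hA c, mul_one]

lemma natCast_mul_integral_pow_two_mul_succ_le [IsProbabilityMeasure μ]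
    (hμ : IsOrthogonalHaar μ) (a c : Fin N) (q : ℕ) :
    N * ∫ A, A a c ^ (2 * (q + 1)) ∂μ ≤ (2 * q + 1) * ∫ A, A a c ^ (2 * q) ∂μ := by
  set M := ∫ A, A a c ^ (2 * (q + 1)) ∂μ
  have hM : 0 ≤ M := integral_nonneg fun A => by rw [pow_mul]; positivity
  have hdiag : (2 * q + 1 : ℝ) * ∫ A, A a c ^ (2 * q) * A a c ^ 2 ∂μ = (2 * q + 1) * M := by
    simp only [M, ← pow_add, mul_add, mul_one]
  have hoff : ∀ b ∈ Finset.univ.erase a,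
      (2 * q + 1 : ℝ) * ∫ A, A a c ^ (2 * q) * A b c ^ 2 ∂μ = M := fun b hb =>
    (hμ.integral_pow_two_mul_succ_eq (Finset.ne_of_mem_erase hb).symm c q).symm
  have hcard : ((Finset.univ.erase a).card : ℝ) = N - 1 := by
    rw [Finset.card_erase_of_mem (Finset.mem_univ a), Finset.card_univ, Fintype.card_fin,
      Nat.cast_pred a.pos]
  rw [hμ.integral_pow_eq_sum_integral_pow_mul_sq a c q, Finset.mul_sum,
    ← Finset.add_sum_erase _ _ (Finset.mem_univ a), hdiag, Finset.sum_congr rfl hoff,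
    Finset.sum_const, nsmul_eq_mul, hcard]
  nlinarith

lemma pow_mul_integral_pow_le [IsProbabilityMeasure μ] (hμ : IsOrthogonalHaar μ) (a c : Fin N)
    (p : ℕ) : (N : ℝ) ^ p * ∫ A, A a c ^ (2 * p) ∂μ ≤ 2 ^ p * p ! := by
  induction p with
  | zero => simp
  | succ p ih =>
    have hrec := hμ.natCast_mul_integral_pow_two_mul_succ_le a c p
    calc (N : ℝ) ^ (p + 1) * ∫ A, A a c ^ (2 * (p + 1)) ∂μ
        = (N : ℝ) ^ p * (N * ∫ A, A a c ^ (2 * (p + 1)) ∂μ) := by ring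
      _ ≤ (N : ℝ) ^ p * ((2 * p + 1) * ∫ A, A a c ^ (2 * p) ∂μ) := by gcongr
      _ ≤ (2 * p + 2) * ((N : ℝ) ^ p * ∫ A, A a c ^ (2 * p) ∂μ) := by
        have hM : 0 ≤ ∫ A, A a c ^ (2 * p) ∂μ :=
          integral_nonneg fun A => by rw [pow_mul]; positivity
        nlinarith [mul_nonneg (pow_nonneg N.cast_nonneg p) hM]
      _ ≤ (2 * p + 2) * (2 ^ p * p !) := by gcongr
      _ = 2 ^ (p + 1) * (p + 1)! := by push_cast [Nat.factorial_succ]; ring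

lemma measure_le_abs_apply_le [IsProbabilityMeasure μ] (hμ : IsOrthogonalHaar μ) (a c : Fin N)
    {t γ : ℝ} (ht : 0 < t) (hγ : N * t ^ 2 = 2 * γ) (hγ1 : 1 ≤ γ) :
    μ {A | t ≤ |A a c|} ≤ ENNReal.ofReal (γ * exp (2 - γ)) := by
  set p := ⌊γ⌋₊
  have hN : (0 : ℝ) < N := by
    by_contra! h
    nlinarith [sq_nonneg t]
  have hsub : {A : Matrix (Fin N) (Fin N) ℝ | t ≤ |A a c|} ⊆ {A | t ^ (2 * p) ≤ A a c ^ (2 * p)} :=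
    fun A hA => (pow_le_pow_left₀ ht.le hA _).trans_eq (Even.pow_abs (even_two_mul p) _)
  have hmarkov : t ^ (2 * p) * μ.real {A | t ^ (2 * p) ≤ A a c ^ (2 * p)} ≤
      ∫ A, A a c ^ (2 * p) ∂μ :=
    mul_meas_ge_le_integral_of_nonneg (ae_of_all _ fun A => by rw [pow_mul]; positivity)
      (by simpa using hμ.integrable_pow_mul_pow a a c (2 * p) 0) _
  have hmoment : ∫ A, A a c ^ (2 * p) ∂μ ≤ 2 ^ p * p ! / N ^ p := by
    rw [le_div_iff₀ (by positivity), mul_comm]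
    exact hμ.pow_mul_integral_pow_le a c p
  rw [ENNReal.le_ofReal_iff_toReal_le (measure_ne_top _ _) (by positivity), ← measureReal_def]
  calc μ.real {A | t ≤ |A a c|} ≤ μ.real {A | t ^ (2 * p) ≤ A a c ^ (2 * p)} :=
        measureReal_mono hsub
    _ ≤ (∫ A, A a c ^ (2 * p) ∂μ) / t ^ (2 * p) := by
        rw [le_div_iff₀ (by positivity), mul_comm]; exact hmarkov
    _ ≤ 2 ^ p * p ! / N ^ p / t ^ (2 * p) := by gcongr
    _ = p ! / γ ^ p := by
        rw [div_div, pow_mul, ← mul_pow, hγ, mul_pow]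
        field_simp
    _ ≤ γ * exp (2 - γ) := factorial_floor_div_pow_le hγ1

lemma measure_smul_blockEmb_notMem_le [IsProbabilityMeasure μ] (hμ : IsOrthogonalHaar μ)
    {m k : ℕ} (hm : m ≤ N) (hk : k ≤ N) {s r γ : ℝ} (hs : 0 < s) (hr : 0 < r)
    (hγ : N * (r / s) ^ 2 = 2 * γ) (hγ1 : 1 ≤ γ) :
    μ {M | s • blockEmb m k M ∉ {B : Matrix (Fin m) (Fin k) ℝ | ∀ i j, |B i j| ≤ r}} ≤
      ENNReal.ofReal (m * k * (γ * exp (2 - γ))) := by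
  have hsub : {M | s • blockEmb m k M ∉ {B : Matrix (Fin m) (Fin k) ℝ | ∀ i j, |B i j| ≤ r}} ⊆
      ⋃ i : Fin m, ⋃ j : Fin k, {A | r / s ≤ |A (Fin.castLE hm i) (Fin.castLE hk j)|} := by
    intro M hM
    simp only [Set.mem_ofPred_eq, not_forall, not_le] at hM
    obtain ⟨i, j, hij⟩ := hM
    rw [Matrix.smul_apply, blockEmb_apply_of_le hm hk, smul_eq_mul, abs_mul, abs_of_pos hs]
      at hij
    simp only [Set.mem_iUnion, Set.mem_ofPred_eq]
    exact ⟨i, j, (div_le_iff₀' hs).mpr hij.le⟩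
  calc _ ≤ _ := measure_mono hsub
    _ ≤ ∑ i : Fin m, ∑ j : Fin k,
          μ {A | r / s ≤ |A (Fin.castLE hm i) (Fin.castLE hk j)|} :=
        (measure_iUnion_fintype_le _ _).trans
          (Finset.sum_le_sum fun i _ => measure_iUnion_fintype_le _ _)
    _ ≤ ∑ _i : Fin m, ∑ _j : Fin k, ENNReal.ofReal (γ * exp (2 - γ)) := by
        gcongr
        exact hμ.measure_le_abs_apply_le _ _ (div_pos hr hs) hγ hγ1
    _ = ENNReal.ofReal (m * k * (γ * exp (2 - γ))) := by
        simp [ENNReal.ofReal_mul, mul_assoc]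

end IsOrthogonalHaar

lemma Matrix.isCompact_setOf_forall_abs_apply_le (m k : ℕ) (r : ℝ) :
    IsCompact {B : Matrix (Fin m) (Fin k) ℝ | ∀ i j, |B i j| ≤ r} := by
  have h : {B : Matrix (Fin m) (Fin k) ℝ | ∀ i j, |B i j| ≤ r} =
      Set.univ.pi fun _ : Fin m => Set.univ.pi fun _ : Fin k => Set.Icc (-r) r := by
    ext B
    simp only [Set.mem_ofPred_eq, abs_le]
    exact ⟨fun h => Set.mem_univ_pi.2 fun i => Set.mem_univ_pi.2 (h i),
      fun h i => Set.mem_univ_pi.1 (Set.mem_univ_pi.1 h i)⟩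
  rw [h]
  exact isCompact_univ_pi fun _ => isCompact_univ_pi fun _ => isCompact_Icc

lemma EReal.coe_mul_log_le_of_le_ofReal {u : ℝ} (hu : 0 ≤ u) {P : ℝ≥0∞} {Q : ℝ} (hQ : 0 < Q)
    (hPQ : P ≤ ENNReal.ofReal Q) :
    (u : EReal) * ENNReal.log P ≤ ((u * Real.log Q : ℝ) : EReal) := by
  rw [EReal.coe_mul, ← ENNReal.log_ofReal_of_pos hQ]
  exact mul_le_mul_of_nonneg_left (ENNReal.log_le_log hPQ) (EReal.coe_nonneg.2 hu)

lemma limsup_coe_mul_log_eq_bot {u : ℕ → ℝ} {P : ℕ → ℝ≥0∞} (hu : ∀ᶠ N in atTop, 0 < u N)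
    (hP : ∀ᶠ N in atTop, P N = 0) :
    limsup (fun N => (u N : EReal) * ENNReal.log (P N)) atTop = ⊥ := by
  refine (limsup_congr ?_).trans (limsup_const ⊥)
  filter_upwards [hu, hP] with N huN hPN
  rw [hPN, ENNReal.log_zero, EReal.mul_bot_of_pos (EReal.coe_pos.2 huN)]

lemma limsup_coe_mul_log_le_neg_of_le {u : ℕ → ℝ} {P : ℕ → ℝ≥0∞} {C c : ℝ} (hC : 0 < C)
    (hc : 0 < c) (hu : Tendsto u atTop (𝓝[>] 0))
    (hP : ∀ᶠ N in atTop, 1 ≤ c / u N →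
      P N ≤ ENNReal.ofReal (C * (c / u N * exp (2 - c / u N)))) :
    limsup (fun N => (u N : EReal) * ENNReal.log (P N)) atTop ≤ ((-c : ℝ) : EReal) := by
  have hupos : ∀ᶠ N in atTop, 0 < u N := hu.eventually eventually_mem_nhdsWithin
  have hγ : Tendsto (fun N => c / u N) atTop atTop := by
    simpa [div_eq_mul_inv] using (tendsto_inv_nhdsGT_zero.comp hu).const_mul_atTop hc
  set r : ℕ → ℝ := fun N => u N * Real.log (C * (c / u N * exp (2 - c / u N)))
  have hr : Tendsto r atTop (𝓝 (-c)) := by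
    have hlim : Tendsto (fun N => u N * (Real.log C + 2) + c * (Real.log (c / u N) / (c / u N))
        - c) atTop (𝓝 (0 * (Real.log C + 2) + c * 0 - c)) :=
      (((tendsto_nhds_of_tendsto_nhdsWithin hu).mul_const _).add
        ((Real.isLittleO_log_id_atTop.tendsto_div_nhds_zero.comp hγ).const_mul c)).sub_const c
    rw [zero_mul, mul_zero, zero_add, zero_sub] at hlim
    refine hlim.congr' ?_
    filter_upwards [hupos] with N huN
    simp only [r]
    rw [Real.log_mul hC.ne' (by positivity), Real.log_mul (by positivity) (exp_pos _).ne',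
      Real.log_exp]
    field_simp
    ring
  calc limsup (fun N => (u N : EReal) * ENNReal.log (P N)) atTop
      ≤ limsup (fun N => ((r N : ℝ) : EReal)) atTop := by
        refine limsup_le_limsup ?_
        filter_upwards [hP, hupos, hγ.eventually_ge_atTop 1] with N hPN huN hγN
        exact EReal.coe_mul_log_le_of_le_ofReal huN.le (by positivity) (hPN hγN)
    _ = ((-c : ℝ) : EReal) := (EReal.tendsto_coe.2 hr).limsup_eq

lemma tendsto_sq_div_nhdsGT_zero_of_isLittleO_sqrt {β : ℕ → ℝ} (hβ_pos : ∀ N, 0 < β N)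
    (hβ_o : β =o[atTop] fun N => Real.sqrt N) :
    Tendsto (fun N => β N ^ 2 / N) atTop (𝓝[>] 0) := by
  refine tendsto_nhdsWithin_iff.2 ⟨?_, ?_⟩
  · refine IsLittleO.tendsto_div_nhds_zero ?_
    simpa [Real.sq_sqrt] using hβ_o.pow two_pos
  · filter_upwards [eventually_ge_atTop 1] with N hN
    exact div_pos (pow_pos (hβ_pos N) 2) (by exact_mod_cast hN)

lemma limsup_coe_mul_log_measure_smul_blockEmb_notMem_le (m k : ℕ)
    {μ : (N : ℕ) → Measure (Matrix (Fin N) (Fin N) ℝ)} [∀ N, IsProbabilityMeasure (μ N)]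
    (hμ : ∀ N, IsOrthogonalHaar (μ N)) {β : ℕ → ℝ} (hβ_pos : ∀ N, 0 < β N)
    (hβ_o : β =o[atTop] fun N => Real.sqrt N) {ε : ℝ} (hε : 0 < ε) :
    limsup (fun N => ((β N ^ 2 / N : ℝ) : EReal) *
        ENNReal.log (μ N {M | β N • blockEmb m k M ∉
          {B : Matrix (Fin m) (Fin k) ℝ | ∀ i j, |B i j| ≤ Real.sqrt (2 * m * ε)}}))
      atTop ≤ ((-ε : ℝ) : EReal) := by
  have hu := tendsto_sq_div_nhdsGT_zero_of_isLittleO_sqrt hβ_pos hβ_o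
  by_cases hmk : m = 0 ∨ k = 0
  · rw [limsup_coe_mul_log_eq_bot (hu.eventually eventually_mem_nhdsWithin)
      (Eventually.of_forall fun N => by rcases hmk with rfl | rfl <;> simp)]
    exact bot_le
  obtain ⟨hm, hk⟩ : 1 ≤ m ∧ 1 ≤ k := by omega
  have hm' : (1 : ℝ) ≤ m := by exact_mod_cast hm
  refine (limsup_coe_mul_log_le_neg_of_le (C := m * k) (c := m * ε) (by positivity)
    (by positivity) hu ?_).trans (EReal.coe_le_coe_iff.2 (by nlinarith))
  filter_upwards [eventually_ge_atTop m, eventually_ge_atTop k] with N hmN hkN hγ1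
  refine (hμ N).measure_smul_blockEmb_notMem_le hmN hkN (hβ_pos N) (by positivity) ?_ hγ1
  have : (0 : ℝ) < N := by exact_mod_cast hm.trans hmN
  have := hβ_pos N
  rw [div_pow, Real.sq_sqrt (by positivity)]
  field_simp

theorem stmt_12_general
    (m k : ℕ)
    (μ : (N : ℕ) → Measure (Matrix (Fin N) (Fin N) ℝ))
    (hμ_prob : ∀ N, IsProbabilityMeasure (μ N))
    (hμ_supp : ∀ N, μ N {A | A * Aᵀ = 1} = 1)
    (hμ_inv : ∀ N (B : Matrix (Fin N) (Fin N) ℝ), B * Bᵀ = 1 →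
      (μ N).map (fun A => B * A) = μ N)
    (β : ℕ → ℝ) (hβ_pos : ∀ N, 0 < β N)
    (hβ_o : β =o[atTop] fun N => Real.sqrt N) :
    (∀ ε > (0 : ℝ),
      Filter.limsup (fun N => ((β N ^ 2 / N : ℝ) : EReal) *
          ENNReal.log (μ N {M | β N • blockEmb m k M ∉
            {B : Matrix (Fin m) (Fin k) ℝ | ∀ i j, |B i j| ≤ Real.sqrt (2 * m * ε)}}))
        atTop ≤ ((-ε : ℝ) : EReal)) ∧
    (∀ a > (0 : ℝ), ∃ K : Set (Matrix (Fin m) (Fin k) ℝ), IsCompact K ∧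
      Filter.limsup (fun N => ((β N ^ 2 / N : ℝ) : EReal) *
          ENNReal.log (μ N {M | β N • blockEmb m k M ∉ K})) atTop ≤ ((-a : ℝ) : EReal)) := by
  have hbox := fun ε (hε : 0 < ε) => limsup_coe_mul_log_measure_smul_blockEmb_notMem_le m k
    (fun N => (⟨hμ_supp N, hμ_inv N⟩ : IsOrthogonalHaar (μ N))) hβ_pos hβ_o hε
  exact ⟨hbox, fun a ha => ⟨_, Matrix.isCompact_setOf_forall_abs_apply_le m k _, hbox a ha⟩⟩

/-- **Exponential tightness of `β_N·Z_N` at speed `N/β_N²`.** For every `ε > 0`, with the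
compact box `K = [-√(2mε), √(2mε)]^{m×k}`, `limsup_N (β_N²/N)·log ℙ(β_N Z_N ∉ K) ≤ -ε`;
in particular the sequence `β_N·Z_N` is exponentially tight with respect to the speed
`N/β_N²`. Here `μ N` is the Haar probability measure on `O(N)`, viewed as a measure on
`N × N` matrices. -/
theorem stmt_12
    (m k : ℕ)
    (μ : (N : ℕ) → Measure (Matrix (Fin N) (Fin N) ℝ))
    (hμ_prob : ∀ N, IsProbabilityMeasure (μ N))
    (hμ_supp : ∀ N, μ N {A | A * Aᵀ = 1} = 1)
    (hμ_inv : ∀ N (B : Matrix (Fin N) (Fin N) ℝ), B * Bᵀ = 1 →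
      (μ N).map (fun A => B * A) = μ N)
    (β : ℕ → ℝ) (hβ_pos : ∀ N, 0 < β N)
    (hβ_top : Tendsto β atTop atTop)
    (hβ_o : β =o[atTop] fun N => Real.sqrt N) :
    (∀ ε > (0 : ℝ),
      Filter.limsup (fun N => ((β N ^ 2 / N : ℝ) : EReal) *
          ENNReal.log (μ N {M | β N • blockEmb m k M ∉
            {B : Matrix (Fin m) (Fin k) ℝ | ∀ i j, |B i j| ≤ Real.sqrt (2 * m * ε)}}))
        atTop ≤ ((-ε : ℝ) : EReal)) ∧
    (∀ a > (0 : ℝ), ∃ K : Set (Matrix (Fin m) (Fin k) ℝ), IsCompact K ∧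
      Filter.limsup (fun N => ((β N ^ 2 / N : ℝ) : EReal) *
          ENNReal.log (μ N {M | β N • blockEmb m k M ∉ K})) atTop ≤ ((-a : ℝ) : EReal)) :=
  stmt_12_general m k μ hμ_prob hμ_supp hμ_inv β hβ_pos hβ_o
end
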